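/- Duality between dense coding advantage and entanglement of purification: for any pure state |ψ⟩ on A'⊗B'⊗C' with ζ = Tr_{C'}|ψ⟩⟨ψ| the state shared by Alice and Bob, one has Δ(A'⟩B')_ζ + E_P(C':B')_{ψ^{C'B'}} = S(B')_ζ, where Δ(A'⟩B')_ζ = max over channels Ω : L(A') → L(A) of the coherent information I(A⟩B')_ω with ω = (Ω⊗id_{B'})(ζ), and E_P(C':B')_ρ = min over channels T : L(E) → L(F) of S(B'F)_ω' where ω' = (id_{B'}⊗T)(φ^{B'E}) for a purification φ of ρ^{C'B'} in C'⊗B'⊗E. -/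

import Mathlib

open Matrix Complex ComplexConjugate
open scoped BigOperators Kronecker ComplexOrder Classical

noncomputable section

namespace Matrix.PosSemidef

variable {n 𝕜 : Type*} [Fintype n] [RCLike 𝕜] [DecidableEq n] {A : Matrix n n 𝕜}

/-- The square root of a positive semidefinite matrix, as defined in Mathlib (Dec 2024). -/
noncomputable def sqrt (hA : A.PosSemidef) : Matrix n n 𝕜 :=
  hA.1.eigenvectorUnitary.1 * diagonal ((↑) ∘ (√·) ∘ hA.1.eigenvalues) *
  (star hA.1.eigenvectorUnitary : Matrix n n 𝕜)

lemma posSemidef_sqrt (hA : A.PosSemidef) : hA.sqrt.PosSemidef := by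
  have hd : (diagonal ((↑) ∘ (√·) ∘ hA.1.eigenvalues) : Matrix n n 𝕜).PosSemidef :=
    posSemidef_diagonal_iff.2 (fun i => by
      simp only [Function.comp_apply]; exact_mod_cast Real.sqrt_nonneg _)
  have := hd.mul_mul_conjTranspose_same (hA.1.eigenvectorUnitary : Matrix n n 𝕜)
  unfold sqrt
  simpa [Matrix.star_eq_conjTranspose] using this

end Matrix.PosSemidef

namespace QIT

variable {n m α β : Type*}

/-- The trace norm `‖X‖₁ = Tr √(X Xᴴ)`. -/
noncomputable def traceNorm [Fintype n] [DecidableEq n] (X : Matrix n n ℂ) : ℝ :=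
  ((Matrix.posSemidef_self_mul_conjTranspose X).sqrt.trace).re

lemma fid_aux [Fintype n] [DecidableEq n] {ρ σ : Matrix n n ℂ}
    (hρ : ρ.PosSemidef) (hσ : σ.PosSemidef) :
    (hρ.sqrt * σ * hρ.sqrt).PosSemidef := by
  have h := hσ.mul_mul_conjTranspose_same hρ.sqrt
  rwa [hρ.posSemidef_sqrt.1] at h

/-- Fidelity `F(ρ,σ) = Tr √(√ρ σ √ρ)` (defined to be `0` on non-states). -/
noncomputable def fidelity [Fintype n] [DecidableEq n] (ρ σ : Matrix n n ℂ) : ℝ :=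
  if h : ρ.PosSemidef ∧ σ.PosSemidef then ((fid_aux h.1 h.2).sqrt.trace).re else 0

/-- Density operators: positive semidefinite with unit trace. -/
def IsDensity [Fintype n] (ρ : Matrix n n ℂ) : Prop := ρ.PosSemidef ∧ ρ.trace = 1

/-- Partial trace over the second tensor factor. -/
def ptraceSnd [Fintype β] (X : Matrix (α × β) (α × β) ℂ) : Matrix α α ℂ :=
  Matrix.of fun i j => ∑ k : β, X (i, k) (j, k)

/-- Partial trace over the first tensor factor. -/
def ptraceFst [Fintype α] (X : Matrix (α × β) (α × β) ℂ) : Matrix β β ℂ :=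
  Matrix.of fun k l => ∑ i : α, X (i, k) (i, l)

/-- `(id ⊗ Φ) X` : apply `Φ` to the second tensor factor. -/
def idTensor (Φ : Matrix n n ℂ → Matrix m m ℂ) (X : Matrix (α × n) (α × n) ℂ) :
    Matrix (α × m) (α × m) ℂ :=
  Matrix.of fun p q => Φ (Matrix.of fun i j => X (p.1, i) (q.1, j)) p.2 q.2

/-- `(Φ ⊗ id) X` : apply `Φ` to the first tensor factor. -/
def tensorId (Φ : Matrix n n ℂ → Matrix m m ℂ) (X : Matrix (n × β) (n × β) ℂ) :
    Matrix (m × β) (m × β) ℂ :=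
  Matrix.of fun p q => Φ (Matrix.of fun i j => X (i, p.2) (j, q.2)) p.1 q.1

/-- Complete positivity: `id_k ⊗ Φ` preserves positive semidefiniteness for all `k`. -/
def IsCompletelyPositive [Fintype n] [Fintype m]
    (Φ : Matrix n n ℂ → Matrix m m ℂ) : Prop :=
  ∀ (k : ℕ) (X : Matrix (Fin k × n) (Fin k × n) ℂ),
    X.PosSemidef → (idTensor Φ X).PosSemidef

/-- A quantum channel: linear, completely positive and trace preserving. -/
def IsChannel [Fintype n] [Fintype m] (Φ : Matrix n n ℂ → Matrix m m ℂ) : Prop :=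
  (∀ X Y, Φ (X + Y) = Φ X + Φ Y) ∧ (∀ (c : ℂ) X, Φ (c • X) = c • Φ X) ∧
    IsCompletelyPositive Φ ∧ ∀ X, (Φ X).trace = X.trace

/-- Von Neumann entropy (base-2), via eigenvalues; `0` on non-Hermitian matrices. -/
noncomputable def entropy [Fintype n] [DecidableEq n] (ρ : Matrix n n ℂ) : ℝ :=
  if h : ρ.IsHermitian then -∑ i, h.eigenvalues i * Real.logb 2 (h.eigenvalues i) else 0

/-- Quantum mutual information `I(A:B) = S(A) + S(B) - S(AB)`. -/
noncomputable def mutualInfo [Fintype α] [Fintype β] [DecidableEq α] [DecidableEq β]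
    (ρ : Matrix (α × β) (α × β) ℂ) : ℝ :=
  entropy (ptraceSnd ρ) + entropy (ptraceFst ρ) - entropy ρ

/-- Coherent information `I(A⟩B) = S(B) - S(AB)`. -/
noncomputable def cohInfo [Fintype α] [Fintype β] [DecidableEq α] [DecidableEq β]
    (ρ : Matrix (α × β) (α × β) ℂ) : ℝ :=
  entropy (ptraceFst ρ) - entropy ρ

/-- Shannon entropy (base 2). -/
noncomputable def shannonH [Fintype n] (p : n → ℝ) : ℝ :=
  -∑ x, p x * Real.logb 2 (p x)

end QIT

open QIT

section Aux

open Polynomial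

variable {k l : Type*} [Fintype k] [DecidableEq k] [Fintype l] [DecidableEq l]

lemma aux_charpoly_diagonal {R : Type*} [CommRing R] (v : k → R) :
    (Matrix.diagonal v).charpoly = ∏ i, (X - C (v i)) := by
  have h : Matrix.charmatrix (Matrix.diagonal v)
      = Matrix.diagonal (fun i => (X : R[X]) - C (v i)) := by
    ext i j
    by_cases hij : i = j
    · subst hij; simp
    · rw [Matrix.charmatrix_apply_ne _ _ _ hij, Matrix.diagonal_apply_ne _ hij,
        Matrix.diagonal_apply_ne _ hij, map_zero, neg_zero]
  rw [Matrix.charpoly, h, Matrix.det_diagonal]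

lemma aux_charpoly_conj (U V M : Matrix k k ℂ) (hUV : U * V = 1) :
    (U * M * V).charpoly = M.charpoly := by
  have hscal : Matrix.scalar k (X : ℂ[X]) = (X : ℂ[X]) • (1 : Matrix k k ℂ[X]) := by
    ext i j
    by_cases hij : i = j
    · subst hij; simp
    · simp [Matrix.diagonal_apply_ne _ hij, Matrix.one_apply_ne hij]
  have hmul : ∀ A B : Matrix k k ℂ, (A * B).map (C : ℂ →+* ℂ[X]) = A.map C * B.map C :=
    fun A B => Matrix.map_mul
  have key : Matrix.charmatrix (U * M * V) = U.map C * Matrix.charmatrix M * V.map C := by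
    rw [Matrix.charmatrix, Matrix.charmatrix]
    simp only [RingHom.mapMatrix_apply]
    rw [Matrix.mul_sub, Matrix.sub_mul, hmul, hmul]
    congr 1
    rw [hscal, Matrix.mul_smul, Matrix.smul_mul, mul_one, ← hmul, hUV]
    simp
  rw [Matrix.charpoly, Matrix.charpoly, key, Matrix.det_mul, Matrix.det_mul]
  have hdet : (U.map (C : ℂ →+* ℂ[X])).det * (V.map C).det = 1 := by
    rw [← Matrix.det_mul, ← hmul, hUV]
    simp
  rw [mul_comm, ← mul_assoc, mul_comm ((V.map C).det), hdet, one_mul]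

lemma aux_roots_charpoly {A : Matrix k k ℂ} (hA : A.IsHermitian) :
    A.charpoly.roots = Finset.univ.val.map (fun i => (hA.eigenvalues i : ℂ)) := by
  have h1 : A.charpoly
      = (Matrix.diagonal (fun i => (hA.eigenvalues i : ℂ))).charpoly := by
    conv_lhs => rw [hA.spectral_theorem]
    exact aux_charpoly_conj _ _ _
      ((Matrix.mem_unitaryGroup_iff).mp hA.eigenvectorUnitary.2)
  rw [h1, aux_charpoly_diagonal]
  have h2 : (∏ i, (X - C ((hA.eigenvalues i : ℂ))))
      = ((Finset.univ.val.map fun i => (hA.eigenvalues i : ℂ)).map fun a => X - C a).prod := by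
    rw [Multiset.map_map]; rfl
  rw [h2, roots_multiset_prod_X_sub_C]

lemma aux_eigenvalues_multiset {A : Matrix k k ℂ} (hA : A.IsHermitian) (e : l ≃ k)
    (hB : (A.submatrix e e).IsHermitian) :
    Finset.univ.val.map hB.eigenvalues = Finset.univ.val.map hA.eigenvalues := by
  have hc : (A.submatrix (e : l → k) (e : l → k)).charpoly = A.charpoly := by
    have h : A.submatrix (e : l → k) (e : l → k) = Matrix.reindex e.symm e.symm A := rfl
    rw [h, Matrix.charpoly_reindex]
  have h3 := aux_roots_charpoly hB
  rw [hc, aux_roots_charpoly hA] at h3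
  have h4 := congrArg (Multiset.map Complex.re) h3.symm
  simpa [Multiset.map_map, Function.comp_def] using h4

lemma aux_entropy_submatrix (A : Matrix k k ℂ) (e : l ≃ k) :
    entropy (A.submatrix e e) = entropy A := by
  by_cases hA : A.IsHermitian
  · have hB : (A.submatrix (e : l → k) (e : l → k)).IsHermitian := hA.submatrix e
    rw [entropy, entropy, dif_pos hA, dif_pos hB, neg_inj]
    have h := congrArg Multiset.sum
      (congrArg (Multiset.map (fun x : ℝ => x * Real.logb 2 x))
        (aux_eigenvalues_multiset hA e hB))
    simp only [Multiset.map_map, Function.comp_def] at h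
    exact h
  · have hB : ¬ (A.submatrix (e : l → k) (e : l → k)).IsHermitian := by
      intro hB
      have h : A = (A.submatrix (e : l → k) (e : l → k)).submatrix e.symm e.symm := by
        ext i j; simp
      rw [h] at hA
      exact hA (hB.submatrix _)
    rw [entropy, entropy, dif_neg hA, dif_neg hB]

lemma aux_entropy_nonneg {ρ : Matrix k k ℂ} (h : ρ.PosSemidef) (h1 : ρ.trace = 1) :
    0 ≤ entropy ρ := by
  rw [entropy, dif_pos h.1, neg_nonneg]
  have hsum : ∑ i, h.1.eigenvalues i = 1 := by
    have htr : ρ.trace = ∑ i, (h.1.eigenvalues i : ℂ) := by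
      conv_lhs => rw [h.1.spectral_theorem]
      rw [Unitary.conjStarAlgAut_apply, Matrix.trace_mul_cycle,
        (Matrix.mem_unitaryGroup_iff').mp h.1.eigenvectorUnitary.2, one_mul,
        Matrix.trace_diagonal]
      rfl
    rw [h1] at htr
    exact_mod_cast htr.symm
  refine Finset.sum_nonpos fun i _ => ?_
  have h0 := h.eigenvalues_nonneg i
  have hle : h.1.eigenvalues i ≤ 1 := by
    calc h.1.eigenvalues i ≤ ∑ j, h.1.eigenvalues j :=
          Finset.single_le_sum (fun j _ => h.eigenvalues_nonneg j) (Finset.mem_univ i)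
      _ = 1 := hsum
  exact mul_nonpos_iff.mpr (Or.inl ⟨h0, Real.logb_nonpos one_lt_two h0 hle⟩)

end Aux

/-- Duality between the dense coding advantage and the entanglement of
purification: `Δ(A'⟩B')_ζ + E_P(C':B') = S(B')_ζ`. -/
theorem dense_coding_EoP_duality {a b c : ℕ}
    (ψ : Fin a × Fin b × Fin c → ℂ) (hψ : ∑ p, Complex.normSq (ψ p) = 1)
    (ζ : Matrix (Fin a × Fin b) (Fin a × Fin b) ℂ)
    (hζ : ζ = Matrix.of fun p q =>
        ∑ z : Fin c, ψ (p.1, (p.2, z)) * conj (ψ (q.1, (q.2, z))))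
    (ρBE : Matrix (Fin b × Fin a) (Fin b × Fin a) ℂ)  -- ψ^{B'E}, purifying system E = A'
    (hρBE : ρBE = Matrix.of fun p q =>
        ∑ z : Fin c, ψ (p.2, (p.1, z)) * conj (ψ (q.2, (q.1, z)))) :
    sSup {x : ℝ | ∃ (d : ℕ) (Ω : Matrix (Fin a) (Fin a) ℂ → Matrix (Fin d) (Fin d) ℂ),
        IsChannel Ω ∧ x = cohInfo (tensorId Ω ζ)} +
      sInf {x : ℝ | ∃ (f : ℕ) (T : Matrix (Fin a) (Fin a) ℂ → Matrix (Fin f) (Fin f) ℂ),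
        IsChannel T ∧ x = entropy (idTensor T ρBE)}
      = entropy (ptraceFst ζ) := by
  classical
  -- ρBE is a density matrix
  have hρpsd : ρBE.PosSemidef := by
    have hB : ρBE = (Matrix.of fun (p : Fin b × Fin a) (z : Fin c) => ψ (p.2, (p.1, z))) *
        (Matrix.of fun (p : Fin b × Fin a) (z : Fin c) => ψ (p.2, (p.1, z)))ᴴ := by
      rw [hρBE]
      ext p q
      simp [Matrix.mul_apply, Matrix.conjTranspose_apply]
    rw [hB]
    exact Matrix.posSemidef_self_mul_conjTranspose _
  have hψ' : ∑ p : Fin b × Fin a, ∑ z : Fin c, Complex.normSq (ψ (p.2, (p.1, z))) = 1 := by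
    simp only [Fintype.sum_prod_type] at hψ ⊢
    rw [← hψ]
    exact Finset.sum_comm
  have hρtr : ρBE.trace = 1 := by
    rw [hρBE]
    calc (Matrix.of fun (p q : Fin b × Fin a) =>
            ∑ z : Fin c, ψ (p.2, (p.1, z)) * conj (ψ (q.2, (q.1, z)))).trace
        = ∑ p : Fin b × Fin a, ∑ z : Fin c,
            (Complex.normSq (ψ (p.2, (p.1, z))) : ℂ) := by
          simp [Matrix.trace, Matrix.diag, Complex.mul_conj]
      _ = ((∑ p : Fin b × Fin a, ∑ z : Fin c,
            Complex.normSq (ψ (p.2, (p.1, z))) : ℝ) : ℂ) := by push_cast; rfl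
      _ = 1 := by rw [hψ', Complex.ofReal_one]
  -- trace preservation of idTensor
  have htrpres : ∀ {f : ℕ} (T : Matrix (Fin a) (Fin a) ℂ → Matrix (Fin f) (Fin f) ℂ),
      (∀ X, (T X).trace = X.trace) →
      (idTensor T ρBE).trace = ρBE.trace := by
    intro f T hT
    simp only [Matrix.trace, Matrix.diag, idTensor, Matrix.of_apply]
    rw [Fintype.sum_prod_type]
    have h : ∀ j : Fin b, (∑ u : Fin f,
        T (Matrix.of fun i k => ρBE (j, i) (j, k)) u u)
        = ∑ i : Fin a, ρBE (j, i) (j, i) := by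
      intro j
      have := hT (Matrix.of fun i k => ρBE (j, i) (j, k))
      simpa [Matrix.trace, Matrix.diag] using this
    rw [Finset.sum_congr rfl fun j _ => h j]
    exact (Fintype.sum_prod_type (f := fun x : Fin b × Fin a => ρBE x x)).symm
  -- swap identity: idTensor T ρBE is tensorId T ζ reindexed
  have hswap : ∀ {f : ℕ} (T : Matrix (Fin a) (Fin a) ℂ → Matrix (Fin f) (Fin f) ℂ),
      idTensor T ρBE = (tensorId T ζ).submatrix
        (Equiv.prodComm (Fin b) (Fin f)) (Equiv.prodComm (Fin b) (Fin f)) := by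
    intro f T
    ext ⟨j, u⟩ ⟨l, v⟩
    show T (Matrix.of fun i k => ρBE (j, i) (l, k)) u v
      = T (Matrix.of fun i k => ζ (i, j) (k, l)) u v
    congr 1
    ext i k
    rw [hρBE, hζ]
    rfl
  -- partial trace preservation
  have hptr : ∀ {f : ℕ} (T : Matrix (Fin a) (Fin a) ℂ → Matrix (Fin f) (Fin f) ℂ),
      (∀ X, (T X).trace = X.trace) →
      ptraceFst (tensorId T ζ) = ptraceFst ζ := by
    intro f T hT
    ext p q
    show (∑ u : Fin f, T (Matrix.of fun i j => ζ (i, p) (j, q)) u u)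
      = ∑ i : Fin a, ζ (i, p) (i, q)
    have := hT (Matrix.of fun i j => ζ (i, p) (j, q))
    simpa [Matrix.trace, Matrix.diag] using this
  -- set equality
  have hsets : {x : ℝ | ∃ (d : ℕ) (Ω : Matrix (Fin a) (Fin a) ℂ → Matrix (Fin d) (Fin d) ℂ),
        IsChannel Ω ∧ x = cohInfo (tensorId Ω ζ)}
      = (fun x => entropy (ptraceFst ζ) - x) ''
        {x : ℝ | ∃ (f : ℕ) (T : Matrix (Fin a) (Fin a) ℂ → Matrix (Fin f) (Fin f) ℂ),
        IsChannel T ∧ x = entropy (idTensor T ρBE)} := by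
    ext x
    constructor
    · rintro ⟨d, Ω, hΩ, rfl⟩
      refine ⟨entropy (idTensor Ω ρBE), ⟨d, Ω, hΩ, rfl⟩, ?_⟩
      rw [cohInfo, hptr Ω hΩ.2.2.2, hswap Ω, aux_entropy_submatrix]
    · rintro ⟨y, ⟨f, T, hT, rfl⟩, rfl⟩
      exact ⟨f, T, hT, by rw [cohInfo, hptr T hT.2.2.2, hswap T, aux_entropy_submatrix]⟩
  -- the identity channel
  have hid : IsChannel (id : Matrix (Fin a) (Fin a) ℂ → Matrix (Fin a) (Fin a) ℂ) := by
    refine ⟨fun X Y => rfl, fun c X => rfl, ?_, fun X => rfl⟩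
    intro k X hX
    exact hX
  have hne : {x : ℝ | ∃ (f : ℕ) (T : Matrix (Fin a) (Fin a) ℂ → Matrix (Fin f) (Fin f) ℂ),
      IsChannel T ∧ x = entropy (idTensor T ρBE)}.Nonempty :=
    ⟨entropy (idTensor (id : Matrix (Fin a) (Fin a) ℂ → Matrix (Fin a) (Fin a) ℂ) ρBE),
      a, id, hid, rfl⟩
  have hbdd : ∀ x ∈ {x : ℝ | ∃ (f : ℕ) (T : Matrix (Fin a) (Fin a) ℂ → Matrix (Fin f) (Fin f) ℂ),
      IsChannel T ∧ x = entropy (idTensor T ρBE)}, (0 : ℝ) ≤ x := by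
    rintro x ⟨f, T, hT, rfl⟩
    refine aux_entropy_nonneg (hT.2.2.1 b ρBE hρpsd) ?_
    rw [htrpres T hT.2.2.2, hρtr]
  have hglb := isGLB_csInf hne ⟨0, hbdd⟩
  set I := sInf {x : ℝ | ∃ (f : ℕ) (T : Matrix (Fin a) (Fin a) ℂ → Matrix (Fin f) (Fin f) ℂ),
      IsChannel T ∧ x = entropy (idTensor T ρBE)} with hI
  have hlub : IsLUB ((fun x => entropy (ptraceFst ζ) - x) ''
      {x : ℝ | ∃ (f : ℕ) (T : Matrix (Fin a) (Fin a) ℂ → Matrix (Fin f) (Fin f) ℂ),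
        IsChannel T ∧ x = entropy (idTensor T ρBE)}) (entropy (ptraceFst ζ) - I) := by
    constructor
    · rintro y ⟨x, hx, rfl⟩
      have := hglb.1 hx
      simp only
      linarith
    · intro ub hub
      have h1 : ∀ x ∈ {x : ℝ | ∃ (f : ℕ)
          (T : Matrix (Fin a) (Fin a) ℂ → Matrix (Fin f) (Fin f) ℂ),
          IsChannel T ∧ x = entropy (idTensor T ρBE)},
          entropy (ptraceFst ζ) - ub ≤ x := by
        intro x hx
        have := hub ⟨x, hx, rfl⟩
        simp only at this
        linarith
      have h2 : entropy (ptraceFst ζ) - ub ≤ I := hglb.2 h1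
      linarith
  rw [hsets, hlub.csSup_eq (hne.image _)]
  ring
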